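/- arXiv:math/9907076 — 3 statements merged into one kernel-verified Lean document; each statement's English description precedes it below -/
import Mathlib

section
/- For π ∈ Π_d with b = |B_π| (the block containing d), under the equivalence ≡_{d+1} (identifying e_σ and e_τ when λ(σ) = λ(τ) and the blocks containing d+1 have equal size), e_π↑ ≡_{d+1} (1/b) e_{(π/d+1)} − (1/b) e_{(π+(d+1))}. -/
open Finset

attribute [local instance] Classical.propDecidable

/-- Homogeneous degree-`d` noncommutative symmetric functions, viewed as
coefficient functions on words of length `d` in the variables. -/
abbrev NCF (d : ℕ) := (Fin d → ℕ) → ℚ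

/-- A coloring is proper for the edge family `ends` if the endpoints of every
edge receive distinct colors. -/
def Proper {d : ℕ} {ε : Type*} {C : Type*} (ends : ε → Sym2 (Fin d)) (w : Fin d → C) : Prop :=
  ∀ (e : ε) (i j : Fin d), ends e = s(i, j) → w i ≠ w j

/-- The noncommutative chromatic symmetric function `Y_G`. -/
noncomputable def Y {d : ℕ} {ε : Type*} (ends : ε → Sym2 (Fin d)) : NCF d :=
  fun w => if Proper ends w then 1 else 0

/-- Noncommutative monomial symmetric function indexed by a set partition. -/
noncomputable def mFun {d : ℕ} (π : Setoid (Fin d)) : NCF d :=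
  fun w => if (∀ i j, w i = w j ↔ π i j) then 1 else 0

/-- Noncommutative power sum symmetric function indexed by a set partition. -/
noncomputable def pFun {d : ℕ} (π : Setoid (Fin d)) : NCF d :=
  fun w => if (∀ i j, π i j → w i = w j) then 1 else 0

/-- Noncommutative elementary symmetric function indexed by a set partition. -/
noncomputable def eFun {d : ℕ} (π : Setoid (Fin d)) : NCF d :=
  fun w => if (∀ i j, i ≠ j → π i j → w i ≠ w j) then 1 else 0

noncomputable instance setoidFintype (d : ℕ) : Fintype (Setoid (Fin d)) :=
  Fintype.ofInjective (fun s : Setoid (Fin d) => (s : Fin d → Fin d → Prop))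
    (fun s t h => Setoid.ext fun a b => by
      have := congrFun (congrFun h a) b; simpa using this.to_iff)

/-- Position action of a permutation on words/NCFs. -/
noncomputable def act {d : ℕ} (δ : Equiv.Perm (Fin d)) (f : NCF d) : NCF d :=
  fun w => f (w ∘ δ)

/-- The induction operator `↑`, repeating the last variable. -/
noncomputable def up {n : ℕ} (f : NCF (n + 1)) : NCF (n + 2) :=
  fun w => if w (Fin.last (n + 1)) = w ⟨n, by omega⟩ then f (fun i => w i.castSucc) else 0

/-- Vertex map collapsing the last vertex onto the next-to-last one (for contraction). -/
def collapse {n : ℕ} : Fin (n + 2) → Fin (n + 1) :=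
  fun i => if h : (i : ℕ) < n + 1 then ⟨i, h⟩ else ⟨n, by omega⟩

/-- The partition of `[d]` into connected components of the spanning subgraph with edge set `S`. -/
def components {d : ℕ} {ε : Type*} (ends : ε → Sym2 (Fin d)) (S : Finset ε) :
    Setoid (Fin d) :=
  Relation.EqvGen.setoid (fun i j => ∃ e ∈ S, ends e = s(i, j))

/-- The size of the block of `π` containing `i`. -/
noncomputable def blockCard {n : ℕ} (π : Setoid (Fin n)) (i : Fin n) : ℕ :=
  (Finset.univ.filter (fun j => π i j)).card

/-- The multiset of block sizes (the type `λ(π)`) of a set partition. -/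
noncomputable def sizes {n : ℕ} (π : Setoid (Fin n)) : Multiset ℕ :=
  (Finset.univ.image (fun i => Finset.univ.filter (fun j => π i j))).val.map Finset.card

/-- `σ ≡ᵢ τ` : same type and blocks containing `i` of equal size. -/
def cls {n : ℕ} (i : Fin n) (σ τ : Setoid (Fin n)) : Prop :=
  sizes σ = sizes τ ∧ blockCard σ i = blockCard τ i

/-- Congruence modulo `i` of noncommutative symmetric functions: the amalgamated
coefficients of their `e`-expansions agree on every `≡ᵢ`-class. -/
noncomputable def EquivI {n : ℕ} (i : Fin n) (F G : NCF n) : Prop :=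
  ∃ a b : Setoid (Fin n) → ℚ,
    F = ∑ τ : Setoid (Fin n), a τ • eFun τ ∧
    G = ∑ τ : Setoid (Fin n), b τ • eFun τ ∧
    ∀ τ, (∑ σ : Setoid (Fin n), if cls i σ τ then a σ else 0)
        = ∑ σ : Setoid (Fin n), if cls i σ τ then b σ else 0

/-- `(e)`-positivity with respect to the congruence modulo `i`. -/
noncomputable def EPos {n : ℕ} (i : Fin n) (F : NCF n) : Prop :=
  ∃ a : Setoid (Fin n) → ℚ,
    F = ∑ τ : Setoid (Fin n), a τ • eFun τ ∧
    ∀ τ, 0 ≤ ∑ σ : Setoid (Fin n), if cls i σ τ then a σ else 0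

/-- `(e)`-positivity of a labeled graph: for some labeling and some congruence. -/
noncomputable def EPosG {d : ℕ} {ε : Type*} (ends : ε → Sym2 (Fin d)) : Prop :=
  ∃ (δ : Equiv.Perm (Fin d)) (i : Fin d),
    EPos i (Y (fun e => (ends e).map δ))

/-- Extend a partition of `{0,…,n}` to one of `{0,…,n+m}`: old blocks are kept,
the new elements (indices `≥ n+1`) satisfying `Q` are merged into the block of
the old last element `n`, and the remaining new elements form singletons. -/
def extendB {n : ℕ} (m : ℕ) (π : Setoid (Fin (n + 1))) (Q : ℕ → Prop) :
    Setoid (Fin (n + 1 + m)) where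
  r x y := x = y ∨
    (∃ (hx : (x : ℕ) < n + 1) (hy : (y : ℕ) < n + 1), π ⟨x, hx⟩ ⟨y, hy⟩) ∨
    (((∃ hx : (x : ℕ) < n + 1, π ⟨x, hx⟩ (Fin.last n)) ∨ (n + 1 ≤ (x : ℕ) ∧ Q (x : ℕ))) ∧
     ((∃ hy : (y : ℕ) < n + 1, π ⟨y, hy⟩ (Fin.last n)) ∨ (n + 1 ≤ (y : ℕ) ∧ Q (y : ℕ))))
  iseqv := by
    constructor
    · intro x; exact Or.inl rfl
    · rintro x y (rfl | ⟨hx, hy, h⟩ | ⟨h1, h2⟩)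
      · exact Or.inl rfl
      · exact Or.inr (Or.inl ⟨hy, hx, π.symm h⟩)
      · exact Or.inr (Or.inr ⟨h2, h1⟩)
    · rintro x y z (rfl | ⟨hx, hy, h⟩ | ⟨h1, h2⟩) h'
      · exact h'
      · rcases h' with rfl | ⟨hy', hz, h''⟩ | ⟨h1', h2'⟩
        · exact Or.inr (Or.inl ⟨hx, hy, h⟩)
        · exact Or.inr (Or.inl ⟨hx, hz, π.trans h h''⟩)
        · rcases h1' with ⟨hy', hB⟩ | ⟨hge, _⟩
          · exact Or.inr (Or.inr ⟨Or.inl ⟨hx, π.trans h hB⟩, h2'⟩)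
          · omega
      · rcases h' with rfl | ⟨hy', hz, h''⟩ | ⟨h1', h2'⟩
        · exact Or.inr (Or.inr ⟨h1, h2⟩)
        · rcases h2 with ⟨hy2, hB⟩ | ⟨hge, _⟩
          · exact Or.inr (Or.inr ⟨h1, Or.inl ⟨hz, π.trans (π.trans (π.symm h'') hB) (π.refl _)⟩⟩)
          · omega
        · exact Or.inr (Or.inr ⟨h1, h2'⟩)

/-- `π + (n+1)` : insert the new element `n+1` into the block containing `n`. -/
def addLast {n : ℕ} (π : Setoid (Fin (n + 1))) : Setoid (Fin (n + 2)) :=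
  extendB 1 π (fun _ => True)

/-- `π / (n+1)` : add the new element `n+1` as a singleton block. -/
def addSingleton {n : ℕ} (π : Setoid (Fin (n + 1))) : Setoid (Fin (n + 2)) :=
  extendB 1 π (fun _ => False)

/-- `σ / (d+1),…,(d+m)` : add the new elements as one additional block. -/
def addBlock {d : ℕ} (m : ℕ) (σ : Setoid (Fin d)) : Setoid (Fin (d + m)) where
  r x y := (∃ (hx : (x : ℕ) < d) (hy : (y : ℕ) < d), σ ⟨x, hx⟩ ⟨y, hy⟩) ∨
    (d ≤ (x : ℕ) ∧ d ≤ (y : ℕ))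
  iseqv := by
    constructor
    · intro x
      by_cases h : (x : ℕ) < d
      · exact Or.inl ⟨h, h, σ.refl _⟩
      · exact Or.inr ⟨by omega, by omega⟩
    · rintro x y (⟨hx, hy, h⟩ | ⟨hx, hy⟩)
      · exact Or.inl ⟨hy, hx, σ.symm h⟩
      · exact Or.inr ⟨hy, hx⟩
    · rintro x y z (⟨hx, hy, h⟩ | ⟨hx, hy⟩) (⟨hy', hz, h'⟩ | ⟨hy', hz⟩)
      · exact Or.inl ⟨hx, hz, σ.trans h h'⟩
      · omega
      · omega
      · exact Or.inr ⟨hx, hz⟩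

noncomputable instance setoidLFO (d : ℕ) : LocallyFiniteOrder (Setoid (Fin d)) :=
  Fintype.toLocallyFiniteOrder

/-- The Möbius function of the lattice of set partitions, with values in `ℚ`. -/
noncomputable def muS {d : ℕ} (a b : Setoid (Fin d)) : ℚ :=
  IncidenceAlgebra.mu ℚ a b

/-- Falling factorial `⟨m⟩_i = m(m-1)⋯(m-i+1)` as a rational number. -/
def ffact (m i : ℕ) : ℚ := ∏ j ∈ Finset.range i, ((m : ℚ) - j)

/-- Rising factorial `(b)_i = b(b+1)⋯(b+i-1)` as a rational number. -/
def rfact (b i : ℕ) : ℚ := ∏ j ∈ Finset.range i, ((b : ℚ) + j)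

/-- The path `P_{n+1}` with edges `v_i v_{i+1}`. -/
def pathEnds (n : ℕ) : Fin n → Sym2 (Fin (n + 1)) :=
  fun e => s(e.castSucc, e.succ)

/-- The cycle `C_{n+1}` with edges `v_i v_{i+1}` (indices mod `n+1`). -/
def cycleEnds (n : ℕ) : Fin (n + 1) → Sym2 (Fin (n + 1)) :=
  fun i => s(i, i + 1)

/-- The commutative chromatic symmetric function `X_G` in `N` variables. -/
noncomputable def Xcomm {d : ℕ} {ε : Type*} (ends : ε → Sym2 (Fin d)) (N : ℕ) :
    MvPolynomial (Fin N) ℚ :=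
  ∑ κ : Fin d → Fin N, if Proper ends κ then ∏ i, MvPolynomial.X (κ i) else 0

section Orientations

variable {V : Type*} {ε : Type*}

/-- `o` is an orientation of the graph with edge endpoints `ends`. -/
def IsOrient (ends : ε → Sym2 V) (o : ε → V × V) : Prop :=
  ∀ e, s((o e).1, (o e).2) = ends e

/-- An orientation is acyclic when it admits no directed cycle. -/
def Acyclic (o : ε → V × V) : Prop :=
  ∀ v : V, ¬ Relation.TransGen (fun a b => ∃ e, o e = (a, b)) v v

/-- `v` is a sink: every edge incident to `v` is directed toward `v`. -/
def IsSink (o : ε → V × V) (v : V) : Prop := ∀ e, (o e).1 ≠ v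

/-- The set of acyclic orientations with unique sink `v₀`. -/
def Aset (ends : ε → Sym2 V) (v₀ : V) : Set (ε → V × V) :=
  {o | IsOrient ends o ∧ Acyclic o ∧ IsSink o v₀ ∧ ∀ v, IsSink o v → v = v₀}

end Orientations

/-- A circuit: a closed walk `u_0, u_1, …, u_m, u_0` with distinct vertices and
distinct edges. -/
structure Circuit {d : ℕ} {ε : Type*} (ends : ε → Sym2 (Fin d)) where
  m : ℕ
  v : Fin (m + 1) → Fin d
  f : Fin (m + 1) → ε
  hv : Function.Injective v
  hf : Function.Injective f
  he : ∀ k, ends (f k) = s(v k, v (k + 1))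

/-- The broken circuit obtained from a circuit: its edge set with the largest
edge removed. -/
noncomputable def broken {d : ℕ} {ε : Type*} [LinearOrder ε] {ends : ε → Sym2 (Fin d)}
    (C : Circuit ends) : Finset ε :=
  (Finset.univ.image C.f).erase
    ((Finset.univ.image C.f).max'
      ⟨C.f 0, Finset.mem_image_of_mem _ (Finset.mem_univ _)⟩)

/-- `P(α)`: partitions `τ ≤ π+(d+1)` whose blocks can be listed as `B_1,…,B_l`
with `|B_i| = α_i` and `d+1 ∈ B_1`. -/
def Pset {d : ℕ} (π : Setoid (Fin (d + 1))) (l : ℕ) (α : Fin l → ℕ) :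
    Set (Setoid (Fin (d + 2))) :=
  {τ | τ ≤ addLast π ∧ ∃ B : Fin l → Finset (Fin (d + 2)),
    (∀ x y, τ x y ↔ ∃ i, x ∈ B i ∧ y ∈ B i) ∧
    (∀ i j, i ≠ j → Disjoint (B i) (B j)) ∧
    (∀ i, (B i).card = α i) ∧
    ∃ hl : 0 < l, Fin.last (d + 1) ∈ B ⟨0, hl⟩}

/-- `G + K_{m+1}` : attach a complete graph on `{v_{d}, v_{d+1}, …, v_{d+m}}`
(`m` new vertices) to the last vertex of a graph `G` on `d+1` vertices. -/
def attachEnds {d : ℕ} {ε : Type*} (ends : ε → Sym2 (Fin (d + 1))) (m : ℕ) :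
    ε ⊕ {p : Fin (m + 1) × Fin (m + 1) // p.1 < p.2} → Sym2 (Fin (d + 1 + m))
  | Sum.inl e => (ends e).map (fun x : Fin (d + 1) => (⟨(x : ℕ), by omega⟩ : Fin (d + 1 + m)))
  | Sum.inr p => s(⟨d + (p.1.1 : ℕ), by omega⟩, ⟨d + (p.1.2 : ℕ), by omega⟩)

/-- The disjoint union `G ⊎ K_m`, with the clique on the `m` new vertices. -/
def disjEnds {d : ℕ} {ε : Type*} (ends : ε → Sym2 (Fin d)) (m : ℕ) :
    ε ⊕ {p : Fin m × Fin m // p.1 < p.2} → Sym2 (Fin (d + m))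
  | Sum.inl e => (ends e).map (Fin.castAdd m)
  | Sum.inr p => s(Fin.natAdd d p.1.1, Fin.natAdd d p.1.2)

/-!
`e_π↑` only sees which letters of a word coincide, so it has an `e`-expansion: the `e_τ` are
triangular over the `p_τ` with diagonal `μ(0̂, τ) ≠ 0`, and the `p_τ` are unitriangular over the
`m_τ`. Relabelling positions by a permutation fixing `d+1` only permutes coefficients inside each
`≡_{d+1}`-class. Relabelling `e_π↑` by the transposition of `d` with some `j ∈ B_π` gives
`[w_{d+1} = w_j] e_π(w_1 ⋯ w_d)`, and these `b` functions sum to `e_{π/d+1} - e_{π+(d+1)}`; so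
their average, which is congruent to `e_π↑`, is the right-hand side.
-/

section Forests

variable {n : ℕ}

def descMaps (n : ℕ) : Finset (Fin n → Fin n) := univ.filter fun f => ∀ i, f i ≤ i

def forestPartition (f : Fin n → Fin n) : Setoid (Fin n) :=
  Relation.EqvGen.setoid fun a b => f a = b

def forestSign (f : Fin n → Fin n) : ℚ := ∏ i, if f i = i then 1 else -1

/-- The Möbius function `μ(0̂, ρ)` of the partition lattice, as a signed count of the recursive
forests (non-roots point to a smaller vertex) whose trees are the blocks of `ρ`. -/
noncomputable def mobiusBot (ρ : Setoid (Fin n)) : ℚ :=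
  ∑ f ∈ (descMaps n).filter (forestPartition · = ρ), forestSign f

lemma forestPartition_le_iff {f : Fin n → Fin n} {x : Setoid (Fin n)} :
    forestPartition f ≤ x ↔ ∀ i, x i (f i) :=
  ⟨fun h _ => h (Relation.EqvGen.rel _ _ rfl), fun h => Setoid.eqvGen_le fun a _ hab => hab ▸ h a⟩

lemma exists_lt_rel_of_ne_bot {x : Setoid (Fin n)} (hx : x ≠ ⊥) : ∃ i j, j < i ∧ x i j := by
  by_contra! h
  refine hx (le_antisymm (fun i j hij => ?_) bot_le)
  rw [Setoid.bot_def]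
  rcases lt_trichotomy i j with hlt | rfl | hgt
  · exact absurd (x.symm hij) (h j i hlt)
  · rfl
  · exact absurd hij (h i j hgt)

/-- The least `i` with a smaller block-mate has exactly one. -/
lemma exists_filter_le_and_rel_eq_pair {x : Setoid (Fin n)} (hx : x ≠ ⊥) :
    ∃ i j, j < i ∧ univ.filter (fun k => k ≤ i ∧ x i k) = {j, i} := by
  set S := univ.filter fun i => ∃ j < i, x i j
  have hS : S.Nonempty := by
    obtain ⟨i, j, hji, hij⟩ := exists_lt_rel_of_ne_bot hx
    exact ⟨i, by simpa [S] using ⟨j, hji, hij⟩⟩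
  obtain ⟨j₀, hj₀, hxj₀⟩ := (mem_filter.mp (S.min'_mem hS)).2
  set i := S.min' hS
  have hmin : ∀ k, k < i → ∀ l < k, ¬ x k l := fun k hk l hlk hkl =>
    absurd (S.min'_le k (by simpa [S] using ⟨l, hlk, hkl⟩)) (not_le.mpr hk)
  refine ⟨i, j₀, hj₀, ?_⟩
  ext k
  simp only [mem_filter, mem_univ, true_and, mem_insert, mem_singleton]
  constructor
  · rintro ⟨hki, hxk⟩
    rcases hki.lt_or_eq with hki | rfl
    · rcases lt_trichotomy k j₀ with hk | rfl | hk
      · exact absurd (x.trans (x.symm hxj₀) hxk) (hmin j₀ hj₀ k hk)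
      · exact Or.inl rfl
      · exact absurd (x.trans (x.symm hxk) hxj₀) (hmin k hki j₀ hk)
    · exact Or.inr rfl
  · rintro (rfl | rfl)
    · exact ⟨hj₀.le, hxj₀⟩
    · exact ⟨le_rfl, x.refl _⟩

lemma sum_forestSign (x : Setoid (Fin n)) :
    ∑ f ∈ (descMaps n).filter (fun f => ∀ i, x i (f i)), forestSign f
      = if x = ⊥ then 1 else 0 := by
  set t : Fin n → Finset (Fin n) := fun i => univ.filter fun j => j ≤ i ∧ x i j
  have hfilter : (descMaps n).filter (fun f => ∀ i, x i (f i)) = Fintype.piFinset t := by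
    ext f
    simp [descMaps, t, Fintype.mem_piFinset, forall_and]
  rw [hfilter]
  unfold forestSign
  -- parents are chosen independently, so the signed count factors over the vertices
  rw [show (∑ f ∈ Fintype.piFinset t, ∏ i, if f i = i then (1 : ℚ) else -1)
      = ∏ i, ∑ j ∈ t i, if j = i then 1 else -1 from
        (Finset.prod_univ_sum t fun i j => if j = i then (1 : ℚ) else -1).symm]
  split_ifs with hx
  · subst hx
    refine Finset.prod_eq_one fun i _ => ?_
    have : t i = {i} := by
      ext j
      simp only [t, mem_filter, mem_univ, true_and, mem_singleton, Setoid.bot_def]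
      exact ⟨fun h => h.2.symm, fun h => ⟨h.le, h.symm⟩⟩
    simp [this]
  · obtain ⟨i, j₀, hj₀, ht⟩ := exists_filter_le_and_rel_eq_pair hx
    refine Finset.prod_eq_zero (mem_univ i) ?_
    rw [show t i = {j₀, i} from ht, sum_pair hj₀.ne, if_neg hj₀.ne, if_pos rfl]
    norm_num

lemma sum_mobiusBot (x : Setoid (Fin n)) :
    ∑ ρ ∈ univ.filter (· ≤ x), mobiusBot ρ = if x = ⊥ then 1 else 0 := by
  rw [← sum_forestSign]
  simp_rw [← forestPartition_le_iff]
  rw [← Finset.sum_fiberwise_of_maps_to (t := univ.filter (· ≤ x))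
    (g := forestPartition) (fun f hf => by simpa using (mem_filter.mp hf).2)]
  refine Finset.sum_congr rfl fun ρ hρ => ?_
  rw [mobiusBot, Finset.filter_filter]
  congr 1
  ext f
  simp only [mem_filter, mem_univ, true_and] at hρ ⊢
  exact and_congr_right fun _ => ⟨fun h => ⟨h ▸ hρ, h⟩, And.right⟩

lemma iterate_le_of_mem_descMaps {f : Fin n → Fin n} (hf : f ∈ descMaps n) (k : ℕ) (j : Fin n) :
    f^[k] j ≤ j := by
  induction k with
  | zero => exact le_rfl
  | succ k ih =>
    rw [Function.iterate_succ_apply']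
    exact ((mem_filter.mp hf).2 _).trans ih

lemma apply_eq_self_iff_of_mem_descMaps {f : Fin n → Fin n} (hf : f ∈ descMaps n) (i : Fin n) :
    f i = i ↔ ∀ j, forestPartition f i j → i ≤ j := by
  constructor
  · intro hfi j hij
    -- the descendants of the root `i` form a union of blocks
    have hle : forestPartition f ≤ Setoid.ker fun a => ∃ k, f^[k] a = i := by
      refine forestPartition_le_iff.mpr fun a => Setoid.ker_def.mpr (propext ⟨?_, ?_⟩)
      · rintro ⟨k, hk⟩
        exact ⟨k, by rw [← Function.iterate_succ_apply, Function.iterate_succ_apply', hk, hfi]⟩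
      · rintro ⟨k, hk⟩
        exact ⟨k + 1, by rw [Function.iterate_succ_apply, hk]⟩
    obtain ⟨k, hk⟩ := (Setoid.ker_def.mp (hle hij)).mp ⟨0, rfl⟩
    exact hk ▸ iterate_le_of_mem_descMaps hf k j
  · intro h
    exact le_antisymm ((mem_filter.mp hf).2 i) (h _ (Relation.EqvGen.rel _ _ rfl))

noncomputable def blockMin (ρ : Setoid (Fin n)) (i : Fin n) : Fin n :=
  (univ.filter (ρ i ·)).min' ⟨i, mem_filter.mpr ⟨mem_univ _, ρ.refl i⟩⟩

lemma rel_blockMin (ρ : Setoid (Fin n)) (i : Fin n) : ρ i (blockMin ρ i) :=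
  (mem_filter.mp (Finset.min'_mem _ _)).2

lemma blockMin_le (ρ : Setoid (Fin n)) (i : Fin n) : blockMin ρ i ≤ i :=
  Finset.min'_le _ _ (mem_filter.mpr ⟨mem_univ _, ρ.refl i⟩)

lemma blockMin_eq_blockMin_iff {ρ : Setoid (Fin n)} {i j : Fin n} :
    blockMin ρ i = blockMin ρ j ↔ ρ i j := by
  refine ⟨fun h => ρ.trans (rel_blockMin ρ i) (h ▸ ρ.symm (rel_blockMin ρ j)), fun h => ?_⟩
  have : univ.filter (ρ i ·) = univ.filter (ρ j ·) := by
    ext k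
    simp only [mem_filter, mem_univ, true_and]
    exact ⟨ρ.trans (ρ.symm h), ρ.trans h⟩
  simp only [blockMin, this]

lemma blockMin_mem_descMaps (ρ : Setoid (Fin n)) : blockMin ρ ∈ descMaps n :=
  mem_filter.mpr ⟨mem_univ _, blockMin_le ρ⟩

lemma forestPartition_blockMin (ρ : Setoid (Fin n)) : forestPartition (blockMin ρ) = ρ := by
  refine le_antisymm (forestPartition_le_iff.mpr (rel_blockMin ρ)) fun i j hij => ?_
  have hstep : ∀ k, forestPartition (blockMin ρ) k (blockMin ρ k) :=
    forestPartition_le_iff.mp le_rfl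
  exact (forestPartition _).trans (hstep i)
    (blockMin_eq_blockMin_iff.mpr hij ▸ (forestPartition _).symm (hstep j))

/-- All forests of a fixed partition have their roots at the block minima, hence the same sign. -/
lemma mobiusBot_ne_zero (ρ : Setoid (Fin n)) : mobiusBot ρ ≠ 0 := by
  have hsign : ∀ f ∈ (descMaps n).filter (forestPartition · = ρ),
      forestSign f = ∏ i, if ∀ j, ρ i j → i ≤ j then 1 else -1 := by
    intro f hf
    obtain ⟨hfD, rfl⟩ := mem_filter.mp hf
    exact Finset.prod_congr rfl fun i _ =>
      if_congr (apply_eq_self_iff_of_mem_descMaps hfD i) rfl rfl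
  rw [mobiusBot, Finset.sum_congr rfl hsign, sum_const, nsmul_eq_mul]
  refine mul_ne_zero (Nat.cast_ne_zero.mpr (Finset.card_ne_zero.mpr ⟨blockMin ρ, ?_⟩))
    (Finset.prod_ne_zero_iff.mpr fun i _ => by split_ifs <;> norm_num)
  exact mem_filter.mpr ⟨blockMin_mem_descMaps ρ, forestPartition_blockMin ρ⟩

end Forests

section Spanning

variable {n : ℕ}

lemma eFun_apply_eq_ite (τ : Setoid (Fin n)) (w : Fin n → ℕ) :
    eFun τ w = if τ ⊓ Setoid.ker w = ⊥ then 1 else 0 := by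
  refine if_congr ⟨fun h => le_antisymm (fun i j hij => ?_) bot_le, fun h i j hne hτ hw => ?_⟩
    rfl rfl
  · by_contra hne
    exact h i j hne (Setoid.inf_iff_and.mp hij).1 (Setoid.inf_iff_and.mp hij).2
  · have : (τ ⊓ Setoid.ker w) i j := Setoid.inf_iff_and.mpr ⟨hτ, hw⟩
    rw [h, Setoid.bot_def] at this
    exact hne this

lemma pFun_apply_eq_ite (τ : Setoid (Fin n)) (w : Fin n → ℕ) :
    pFun τ w = if τ ≤ Setoid.ker w then 1 else 0 :=
  if_congr ⟨fun h _ _ => h _ _, fun h i j => @h i j⟩ rfl rfl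

lemma mFun_apply_eq_ite (σ : Setoid (Fin n)) (w : Fin n → ℕ) :
    mFun σ w = if Setoid.ker w = σ then 1 else 0 :=
  if_congr ⟨fun h => Setoid.ext fun i j => Setoid.ker_def.trans (h i j), fun h _ _ => h ▸ Iff.rfl⟩
    rfl rfl

lemma eFun_eq_sum_pFun (τ : Setoid (Fin n)) :
    eFun τ = ∑ ρ ∈ univ.filter (· ≤ τ), mobiusBot ρ • pFun ρ := by
  funext w
  simp only [eFun_apply_eq_ite, ← sum_mobiusBot, Finset.sum_apply, Pi.smul_apply,
    pFun_apply_eq_ite, smul_eq_mul, mul_ite, mul_one, mul_zero, ← Finset.sum_filter,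
    Finset.filter_filter, le_inf_iff]

lemma pFun_eq_sum_mFun (σ : Setoid (Fin n)) :
    pFun σ = ∑ τ ∈ univ.filter (σ ≤ ·), mFun τ := by
  funext w
  simp [pFun_apply_eq_ite, Finset.sum_apply, mFun_apply_eq_ite]

lemma mem_span_range_of_triangular {ι K M : Type*} [DivisionRing K] [AddCommGroup M]
    [Module K M] {r : ι → ι → Prop} (hr : WellFounded r) {u v : ι → M} (c : ι → K)
    (hc : ∀ x, c x ≠ 0) (huv : ∀ x, c x • v x - u x ∈ Submodule.span K (v '' {y | r y x}))
    (x : ι) : v x ∈ Submodule.span K (Set.range u) := by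
  induction x using hr.induction with
  | _ x ih =>
    have hlower : Submodule.span K (v '' {y | r y x}) ≤ Submodule.span K (Set.range u) :=
      Submodule.span_le.mpr (Set.image_subset_iff.mpr ih)
    have hcv : c x • v x ∈ Submodule.span K (Set.range u) := by
      simpa using Submodule.add_mem _ (hlower (huv x)) (Submodule.subset_span ⟨x, rfl⟩)
    simpa [smul_smul, inv_mul_cancel₀ (hc x)] using Submodule.smul_mem _ (c x)⁻¹ hcv

lemma pFun_mem_span_eFun (σ : Setoid (Fin n)) :
    pFun σ ∈ Submodule.span ℚ (Set.range eFun) := by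
  refine mem_span_range_of_triangular wellFounded_lt mobiusBot mobiusBot_ne_zero (fun τ => ?_) σ
  have hsplit : univ.filter (· ≤ τ) = insert τ (univ.filter (· < τ)) := by
    ext ρ
    simp [le_iff_lt_or_eq, or_comm]
  rw [eFun_eq_sum_pFun, hsplit, Finset.sum_insert (by simp), sub_add_cancel_left]
  exact Submodule.neg_mem _ (Submodule.sum_mem _ fun ρ hρ =>
    Submodule.smul_mem _ _ (Submodule.subset_span ⟨ρ, (mem_filter.mp hρ).2, rfl⟩))

lemma mFun_mem_span_pFun (σ : Setoid (Fin n)) :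
    mFun σ ∈ Submodule.span ℚ (Set.range pFun) := by
  refine mem_span_range_of_triangular wellFounded_gt (fun _ => (1 : ℚ)) (fun _ => one_ne_zero)
    (fun τ => ?_) σ
  have hsplit : univ.filter (τ ≤ ·) = insert τ (univ.filter (τ < ·)) := by
    ext ρ
    simp [le_iff_lt_or_eq, eq_comm, or_comm]
  rw [pFun_eq_sum_mFun, hsplit, Finset.sum_insert (by simp), one_smul, sub_add_cancel_left]
  exact Submodule.neg_mem _ (Submodule.sum_mem _ fun ρ hρ =>
    Submodule.subset_span ⟨ρ, (mem_filter.mp hρ).2, rfl⟩)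

/-- Degree-`n` elements of `NCSym`: coefficients invariant under renaming the letters. -/
def KerInvariant (F : NCF n) : Prop :=
  ∀ w w' : Fin n → ℕ, (∀ i j, w i = w j ↔ w' i = w' j) → F w = F w'

lemma KerInvariant.eq_sum_smul_mFun {F : NCF n} (hF : KerInvariant F) :
    F = ∑ σ, F (fun i => (blockMin σ i : ℕ)) • mFun σ := by
  funext w
  simp only [Finset.sum_apply, Pi.smul_apply, mFun_apply_eq_ite, smul_eq_mul, mul_ite, mul_one,
    mul_zero, Finset.sum_ite_eq, mem_univ, if_true]
  exact hF _ _ fun i j => by rw [Fin.val_inj, blockMin_eq_blockMin_iff, Setoid.ker_def]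

lemma KerInvariant.exists_eq_sum_smul_eFun {F : NCF n} (hF : KerInvariant F) :
    ∃ a : Setoid (Fin n) → ℚ, F = ∑ τ, a τ • eFun τ := by
  have hpe : Submodule.span ℚ (Set.range pFun) ≤ Submodule.span ℚ (Set.range (eFun (d := n))) :=
    Submodule.span_le.mpr (Set.range_subset_iff.mpr pFun_mem_span_eFun)
  have hF' : F ∈ Submodule.span ℚ (Set.range eFun) := by
    rw [hF.eq_sum_smul_mFun]
    exact Submodule.sum_mem _ fun σ _ => Submodule.smul_mem _ _ (hpe (mFun_mem_span_pFun σ))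
  obtain ⟨a, ha⟩ := (Submodule.mem_span_range_iff_exists_fun ℚ).mp hF'
  exact ⟨a, ha.symm⟩

lemma kerInvariant_eFun (τ : Setoid (Fin n)) : KerInvariant (eFun τ) := fun w w' h => by
  simp only [eFun, ne_eq, h]

lemma KerInvariant.up {F : NCF (n + 1)} (hF : KerInvariant F) : KerInvariant (up F) :=
  fun w w' h => by
    rw [_root_.up, _root_.up, hF (fun i => w i.castSucc) (fun i => w' i.castSucc) fun i j => h _ _]
    exact if_congr (h _ _) rfl rfl

end Spanning

section Relabel

variable {n : ℕ}

lemma eFun_comap (s : Equiv.Perm (Fin n)) (τ : Setoid (Fin n)) (w : Fin n → ℕ) :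
    eFun (τ.comap s) w = eFun τ (w ∘ s.symm) := by
  refine if_congr ⟨fun h a b hab hτ => ?_, fun h i j hij hτ => ?_⟩ rfl rfl
  · exact h _ _ (s.symm.injective.ne hab) (by simpa [Setoid.comap_rel] using hτ)
  · simpa using h (s i) (s j) (s.injective.ne hij) hτ

lemma comap_comap_symm (δ : Equiv.Perm (Fin n)) (τ : Setoid (Fin n)) :
    (τ.comap δ).comap δ.symm = τ :=
  Setoid.ext fun _ _ => by simp [Setoid.comap_rel]

lemma comap_symm_comap (δ : Equiv.Perm (Fin n)) (τ : Setoid (Fin n)) :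
    (τ.comap δ.symm).comap δ = τ :=
  Setoid.ext fun _ _ => by simp [Setoid.comap_rel]

def comapEquiv (δ : Equiv.Perm (Fin n)) : Setoid (Fin n) ≃ Setoid (Fin n) where
  toFun τ := τ.comap δ
  invFun τ := τ.comap δ.symm
  left_inv := comap_comap_symm δ
  right_inv := comap_symm_comap δ

lemma act_sum_smul_eFun (δ : Equiv.Perm (Fin n)) (a : Setoid (Fin n) → ℚ) :
    act δ (∑ τ, a τ • eFun τ) = ∑ τ, a (τ.comap δ) • eFun τ := by
  funext w
  simp only [act, Finset.sum_apply, Pi.smul_apply]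
  refine Fintype.sum_equiv (comapEquiv δ.symm) _ _ fun τ => ?_
  simp only [comapEquiv, Equiv.coe_fn_mk, comap_symm_comap, eFun_comap, Equiv.symm_symm]

lemma blockCard_comap (s : Equiv.Perm (Fin n)) (τ : Setoid (Fin n)) (i : Fin n) :
    blockCard (τ.comap s) i = blockCard τ (s i) :=
  Finset.card_equiv s fun j => by simp [Setoid.comap_rel]

lemma sizes_comap (s : Equiv.Perm (Fin n)) (τ : Setoid (Fin n)) :
    sizes (τ.comap s) = sizes τ := by
  have hblock : ∀ i, univ.filter ((τ.comap s) i ·)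
      = (univ.filter (τ (s i) ·)).map s.symm.toEmbedding := by
    intro i
    ext j
    simp [Setoid.comap_rel]
  have himage : univ.image (fun i => univ.filter ((τ.comap s) i ·))
      = (univ.image fun i => univ.filter (τ i ·)).map
          (Finset.mapEmbedding s.symm.toEmbedding).toEmbedding := by
    ext B
    simp only [hblock, mem_image, mem_univ, true_and, mem_map, RelEmbedding.coe_toEmbedding,
      Finset.mapEmbedding_apply]
    exact ⟨fun ⟨i, hi⟩ => ⟨_, ⟨s i, rfl⟩, hi⟩,
      fun ⟨_, ⟨k, rfl⟩, hk⟩ => ⟨s.symm k, by simpa using hk⟩⟩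
  rw [sizes, himage, Finset.map_val, Multiset.map_map]
  exact Multiset.map_congr rfl fun B _ => Finset.card_map _

lemma cls_comap_iff {i : Fin n} (s : Equiv.Perm (Fin n)) (hs : s i = i) (σ τ : Setoid (Fin n)) :
    cls i (σ.comap s) τ ↔ cls i σ τ := by
  rw [cls, cls, sizes_comap, blockCard_comap, hs]

lemma sum_cls_comap {i : Fin n} (s : Equiv.Perm (Fin n)) (hs : s i = i)
    (a : Setoid (Fin n) → ℚ) (τ : Setoid (Fin n)) :
    ∑ σ, (if cls i σ τ then a (σ.comap s) else 0) = ∑ σ, if cls i σ τ then a σ else 0 :=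
  Fintype.sum_equiv (comapEquiv s) _ _ fun σ => if_congr (cls_comap_iff s hs σ τ).symm rfl rfl

lemma comap_swap_of_rel {π : Setoid (Fin n)} {a b : Fin n} (h : π a b) :
    π.comap (Equiv.swap a b) = π := by
  have hmove : ∀ x, π (Equiv.swap a b x) x := by
    intro x
    rw [Equiv.swap_apply_def]
    split_ifs with hxa hxb
    · exact hxa ▸ π.symm h
    · exact hxb ▸ h
    · exact π.refl x
  exact Setoid.ext fun x y => by
    rw [Setoid.comap_rel]
    exact ⟨fun hxy => π.trans (π.symm (hmove x)) (π.trans hxy (hmove y)),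
      fun hxy => π.trans (hmove x) (π.trans hxy (π.symm (hmove y)))⟩

lemma eFun_comp_swap {π : Setoid (Fin n)} {a b : Fin n} (h : π a b) (w : Fin n → ℕ) :
    eFun π (w ∘ Equiv.swap a b) = eFun π w := by
  rw [← Equiv.symm_swap, ← eFun_comap, comap_swap_of_rel h]

theorem equivI_smul_sum_act {ι : Type*} {i : Fin n} {F : NCF n}
    (hF : ∃ a : Setoid (Fin n) → ℚ, F = ∑ τ, a τ • eFun τ) {s : Finset ι} (hs : s.Nonempty)
    {δ : ι → Equiv.Perm (Fin n)} (hδ : ∀ j ∈ s, δ j i = i) :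
    EquivI i F ((#s : ℚ)⁻¹ • ∑ j ∈ s, act (δ j) F) := by
  obtain ⟨a, rfl⟩ := hF
  refine ⟨a, fun τ => (#s : ℚ)⁻¹ * ∑ j ∈ s, a (τ.comap (δ j)), rfl, ?_, fun τ => ?_⟩
  · simp only [act_sum_smul_eFun, mul_smul, Finset.sum_smul, Finset.smul_sum]
    exact Finset.sum_comm
  have hcard : (#s : ℚ) ≠ 0 := Nat.cast_ne_zero.mpr hs.card_pos.ne'
  calc ∑ σ, (if cls i σ τ then a σ else 0)
      = (#s : ℚ)⁻¹ * ∑ j ∈ s, ∑ σ, if cls i σ τ then a σ else 0 := by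
        rw [sum_const, nsmul_eq_mul, inv_mul_cancel_left₀ hcard]
    _ = (#s : ℚ)⁻¹ * ∑ j ∈ s, ∑ σ, if cls i σ τ then a (σ.comap (δ j)) else 0 := by
        rw [Finset.sum_congr rfl fun j hj => (sum_cls_comap (δ j) (hδ j hj) a τ).symm]
    _ = ∑ σ, if cls i σ τ then (#s : ℚ)⁻¹ * ∑ j ∈ s, a (σ.comap (δ j)) else 0 := by
        rw [Finset.sum_comm, Finset.mul_sum]
        refine Finset.sum_congr rfl fun σ _ => ?_
        split_ifs <;> simp

end Relabel

section Extension

variable {d : ℕ}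

lemma addSingleton_castSucc_castSucc (π : Setoid (Fin (d + 1))) (i j : Fin (d + 1)) :
    addSingleton π i.castSucc j.castSucc ↔ π i j := by
  unfold addSingleton extendB
  simp only [Fin.val_castSucc, Fin.is_lt, exists_true_left, Fin.eta, Fin.castSucc_inj, and_false,
    or_false]
  constructor
  · rintro (rfl | h | ⟨hi, hj⟩)
    exacts [π.refl _, h, π.trans hi (π.symm hj)]
  · exact fun h => Or.inr (Or.inl h)

lemma addLast_castSucc_castSucc (π : Setoid (Fin (d + 1))) (i j : Fin (d + 1)) :
    addLast π i.castSucc j.castSucc ↔ π i j := by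
  unfold addLast extendB
  simp only [Fin.val_castSucc, Fin.is_lt, exists_true_left, Fin.eta, Fin.castSucc_inj, and_true,
    not_le.mpr (Fin.is_lt _), or_false]
  constructor
  · rintro (rfl | h | ⟨hi, hj⟩)
    exacts [π.refl _, h, π.trans hi (π.symm hj)]
  · exact fun h => Or.inr (Or.inl h)

lemma not_addSingleton_castSucc_last (π : Setoid (Fin (d + 1))) (i : Fin (d + 1)) :
    ¬ addSingleton π i.castSucc (Fin.last (d + 1)) := by
  unfold addSingleton extendB
  simp

lemma addLast_castSucc_last (π : Setoid (Fin (d + 1))) (i : Fin (d + 1)) :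
    addLast π i.castSucc (Fin.last (d + 1)) ↔ π i (Fin.last d) := by
  unfold addLast extendB
  simp [Fin.is_le, not_lt.mpr (Fin.is_le _)]

lemma eFun_apply_eq_ite_castSucc {m : ℕ} (τ : Setoid (Fin (m + 1))) (w : Fin (m + 1) → ℕ) :
    eFun τ w = if (∀ i j : Fin m, i ≠ j → τ i.castSucc j.castSucc → w i.castSucc ≠ w j.castSucc)
      ∧ ∀ i : Fin m, τ i.castSucc (Fin.last m) → w i.castSucc ≠ w (Fin.last m) then 1 else 0 := by
  refine if_congr ⟨fun h => ⟨fun i j hij => h _ _ ((Fin.castSucc_injective m).ne hij),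
    fun i => h _ _ (Fin.castSucc_ne_last i)⟩, fun ⟨hcs, hlast⟩ x y hxy hτ => ?_⟩ rfl rfl
  induction x using Fin.lastCases with
  | last =>
    induction y using Fin.lastCases with
    | last => exact absurd rfl hxy
    | cast j => exact (hlast j (τ.symm hτ)).symm
  | cast i =>
    induction y using Fin.lastCases with
    | last => exact hlast i hτ
    | cast j => exact hcs i j (fun h => hxy (h ▸ rfl)) hτ

lemma eFun_addSingleton (π : Setoid (Fin (d + 1))) (w : Fin (d + 2) → ℕ) :
    eFun (addSingleton π) w = eFun π (w ∘ Fin.castSucc) := by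
  rw [eFun_apply_eq_ite_castSucc]
  simp only [addSingleton_castSucc_castSucc, not_addSingleton_castSucc_last, false_imp_iff,
    implies_true, and_true]
  rfl

lemma eFun_addLast (π : Setoid (Fin (d + 1))) (w : Fin (d + 2) → ℕ) :
    eFun (addLast π) w = if (∀ i j, i ≠ j → π i j → w i.castSucc ≠ w j.castSucc)
      ∧ ∀ i, π i (Fin.last d) → w i.castSucc ≠ w (Fin.last (d + 1)) then 1 else 0 := by
  rw [eFun_apply_eq_ite_castSucc]
  simp only [addLast_castSucc_castSucc, addLast_castSucc_last]

/-- The new letter can repeat at most one letter of the block `B_π`, on which `w` is injective. -/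
lemma sum_ite_eq_eFun_addSingleton_sub_eFun_addLast (π : Setoid (Fin (d + 1)))
    (w : Fin (d + 2) → ℕ) :
    ∑ j ∈ univ.filter (π (Fin.last d) ·),
      (if w (Fin.last (d + 1)) = w j.castSucc then eFun π (w ∘ Fin.castSucc) else 0)
      = eFun (addSingleton π) w - eFun (addLast π) w := by
  rw [eFun_addSingleton, eFun_addLast]
  by_cases hπ : ∀ i j, i ≠ j → π i j → w i.castSucc ≠ w j.castSucc
  · have he : eFun π (w ∘ Fin.castSucc) = 1 := if_pos hπ
    simp only [he]
    by_cases hnew : ∀ i, π i (Fin.last d) → w i.castSucc ≠ w (Fin.last (d + 1))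
    · rw [if_pos ⟨hπ, hnew⟩, sub_self]
      exact Finset.sum_eq_zero fun j hj =>
        if_neg fun h => hnew j (π.symm (mem_filter.mp hj).2) h.symm
    · obtain ⟨k, hk, hwk⟩ : ∃ k, π k (Fin.last d) ∧ w k.castSucc = w (Fin.last (d + 1)) := by
        simpa using hnew
      rw [if_neg fun h => hnew h.2, sub_zero,
        Finset.sum_eq_single_of_mem k (mem_filter.mpr ⟨mem_univ _, π.symm hk⟩), if_pos hwk.symm]
      intro j hj hjk
      exact if_neg fun h =>
        hπ j k hjk (π.trans (π.symm (mem_filter.mp hj).2) (π.symm hk)) (h.symm.trans hwk.symm)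
  · have he : eFun π (w ∘ Fin.castSucc) = 0 := if_neg hπ
    simp [he, hπ]

lemma swap_castSucc_apply_last (i j : Fin (d + 1)) :
    Equiv.swap i.castSucc j.castSucc (Fin.last (d + 1)) = Fin.last (d + 1) :=
  Equiv.swap_apply_of_ne_of_ne (Fin.castSucc_lt_last i).ne' (Fin.castSucc_lt_last j).ne'

lemma act_swap_up_eFun (π : Setoid (Fin (d + 1))) {j : Fin (d + 1)} (hj : π j (Fin.last d))
    (w : Fin (d + 2) → ℕ) :
    act (Equiv.swap j.castSucc (Fin.last d).castSucc) (up (eFun π)) w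
      = if w (Fin.last (d + 1)) = w j.castSucc then eFun π (w ∘ Fin.castSucc) else 0 := by
  have hd : Equiv.swap j.castSucc (Fin.last d).castSucc ⟨d, by omega⟩ = j.castSucc :=
    Equiv.swap_apply_right _ _
  have hrest : (fun i : Fin (d + 1) => w (Equiv.swap j.castSucc (Fin.last d).castSucc i.castSucc))
      = (w ∘ Fin.castSucc) ∘ Equiv.swap j (Fin.last d) := by
    funext i
    simp [(Fin.castSucc_injective _).swap_apply]
  simp only [act, up, Function.comp_apply, swap_castSucc_apply_last, hd, hrest, eFun_comp_swap hj]

lemma sum_act_swap_up_eFun (π : Setoid (Fin (d + 1))) :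
    ∑ j ∈ univ.filter (π (Fin.last d) ·), act (Equiv.swap j.castSucc (Fin.last d).castSucc)
      (up (eFun π)) = eFun (addSingleton π) - eFun (addLast π) := by
  funext w
  rw [Finset.sum_apply, Pi.sub_apply, ← sum_ite_eq_eFun_addSingleton_sub_eFun_addLast]
  exact Finset.sum_congr rfl fun j hj => act_swap_up_eFun π (π.symm (mem_filter.mp hj).2) w

end Extension

/-- Modulo the congruence `≡_{d+1}`,
`e_π↑ ≡ (1/b) e_{(π/d+1)} - (1/b) e_{(π+(d+1))}` where `b = |B_π|`. -/
theorem up_eFun_congruence {d : ℕ} (π : Setoid (Fin (d + 1))) :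
    EquivI (Fin.last (d + 1)) (up (eFun π))
      ((1 / (blockCard π (Fin.last d) : ℚ)) • eFun (addSingleton π)
        - (1 / (blockCard π (Fin.last d) : ℚ)) • eFun (addLast π)) := by
  have hB : (univ.filter (π (Fin.last d) ·)).Nonempty :=
    ⟨Fin.last d, mem_filter.mpr ⟨mem_univ _, π.refl _⟩⟩
  have key := equivI_smul_sum_act (kerInvariant_eFun π).up.exists_eq_sum_smul_eFun hB
    (δ := fun j => Equiv.swap j.castSucc (Fin.last d).castSucc)
    fun j _ => swap_castSucc_apply_last j (Fin.last d)
  rw [sum_act_swap_up_eFun] at key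
  rwa [← smul_sub, one_div]
end

section
/- The commutative chromatic symmetric function X_{P_d} of the path on d vertices is e-positive: all coefficients in its expansion in elementary symmetric functions e_λ are nonnegative. -/
open Finset

attribute [local instance] Classical.propDecidable

/-- The product of elementary symmetric polynomials indexed by a multiset of
part sizes: `e_λ`. -/
noncomputable def eProd {N : ℕ} (p : Multiset ℕ) : MvPolynomial (Fin N) ℚ :=
  (p.map (fun k => MvPolynomial.esymm (Fin N) ℚ k)).prod

/-!
Coloring the path vertex by vertex and recording the color `c` of the last vertex gives
`q_{n+1}(c) = x_c (X_{P_{n+1}} - q_n(c))`; summing over `c` yields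
`X_{P_{n+1}} = ∑_{k+m=n} (-1)^m p_{m+1} X_{P_k}`, i.e. `P(t) C(t) = 1` for
`P = ∑ X_{P_n} t^n` and `C = 1 + ∑_{m ≥ 1} (-1)^m p_m t^m`. Newton's identities say
`E(t) C(t) = ∑ (1 - n) e_n t^n`, so `P(t) ∑ (1 - n) e_n t^n = E(t)`, that is
`X_{P_{n+1}} = e_{n+1} + ∑_{k+m=n} m e_{m+1} X_{P_k}`, and `e`-positivity follows by induction
on `n`.
-/

open MvPolynomial

/-- `pathX N n` is `X_{P_n}` for the path on `n` vertices (whereas `pathEnds n` has `n + 1`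
vertices); `X_{P_0} = 1`. -/
noncomputable def pathX (N : ℕ) : ℕ → MvPolynomial (Fin N) ℚ
  | 0 => 1
  | n + 1 => Xcomm (pathEnds n) N

noncomputable def pathXLast (N n : ℕ) (c : Fin N) : MvPolynomial (Fin N) ℚ :=
  ∑ κ : Fin (n + 1) → Fin N,
    if Proper (pathEnds n) κ ∧ κ (Fin.last n) = c then ∏ i, X (κ i) else 0

theorem proper_pathEnds_iff {n : ℕ} {C : Type*} (κ : Fin (n + 1) → C) :
    Proper (pathEnds n) κ ↔ ∀ e : Fin n, κ e.castSucc ≠ κ e.succ := by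
  refine ⟨fun h e => h e _ _ rfl, fun h e i j hij => ?_⟩
  rcases Sym2.eq_iff.mp hij with ⟨rfl, rfl⟩ | ⟨rfl, rfl⟩
  exacts [h e, (h e).symm]

theorem proper_pathEnds_snoc {n : ℕ} {C : Type*} (κ : Fin (n + 1) → C) (c : C) :
    Proper (pathEnds (n + 1)) (Fin.snoc κ c : Fin (n + 2) → C) ↔
      Proper (pathEnds n) κ ∧ κ (Fin.last n) ≠ c := by
  simp only [proper_pathEnds_iff, Fin.forall_fin_succ', Fin.snoc_castSucc, Fin.succ_last,
    Fin.snoc_last, Fin.succ_castSucc]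

theorem pathX_succ_eq_sum_pathXLast (N n : ℕ) : pathX N (n + 1) = ∑ c, pathXLast N n c := by
  simp only [pathX, Xcomm, pathXLast]
  rw [Finset.sum_comm]
  refine Finset.sum_congr rfl fun κ _ => ?_
  split_ifs with h <;> simp [h]

theorem pathXLast_zero (N : ℕ) (c : Fin N) : pathXLast N 0 c = X c := by
  have hproper (κ : Fin 1 → Fin N) : Proper (pathEnds 0) κ := fun e => e.elim0
  rw [pathXLast, ← (Equiv.funUnique (Fin 1) (Fin N)).symm.sum_comp]
  simp [hproper, Fin.last]

theorem pathXLast_succ (N n : ℕ) (c : Fin N) :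
    pathXLast N (n + 1) c = X c * (pathX N (n + 1) - pathXLast N n c) := by
  have hsnoc (p : Fin N × (Fin (n + 1) → Fin N)) :
      Fin.snocEquiv (fun _ => Fin N) p = Fin.snoc p.2 p.1 := rfl
  rw [pathXLast, ← (Fin.snocEquiv fun _ => Fin N).sum_comp, Fintype.sum_prod_type]
  simp only [hsnoc, proper_pathEnds_snoc, Fin.snoc_last, Fin.prod_univ_castSucc (n := n + 1),
    Fin.snoc_castSucc]
  rw [Fintype.sum_eq_single c fun c' hc' => by simp [hc']]
  simp only [and_true]
  rw [pathX, Xcomm, pathXLast, mul_sub, Finset.mul_sum, Finset.mul_sum, ← Finset.sum_sub_distrib]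
  refine Finset.sum_congr rfl fun κ _ => ?_
  split_ifs <;> simp_all [mul_comm]

theorem pathXLast_eq_sum (N n : ℕ) (c : Fin N) :
    pathXLast N n c = ∑ km ∈ antidiagonal n, (-1) ^ km.2 * X c ^ (km.2 + 1) * pathX N km.1 := by
  induction n with
  | zero => simp [pathXLast_zero, pathX]
  | succ n ih =>
    rw [pathXLast_succ, ih, Finset.Nat.sum_antidiagonal_succ', mul_sub, Finset.mul_sum,
      sub_eq_add_neg, ← Finset.sum_neg_distrib]
    congr 1
    · simp
    · exact Finset.sum_congr rfl fun km _ => by ring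

theorem pathX_succ_eq_sum_psum (N n : ℕ) :
    pathX N (n + 1) =
      ∑ km ∈ antidiagonal n, (-1) ^ km.2 * psum (Fin N) ℚ (km.2 + 1) * pathX N km.1 := by
  simp only [pathX_succ_eq_sum_pathXLast, pathXLast_eq_sum, psum, Finset.sum_mul, Finset.mul_sum]
  exact Finset.sum_comm

/-- A reindexed form of Newton's identity `MvPolynomial.mul_esymm_eq_sum`. -/
theorem succ_mul_esymm_succ_eq_sum (σ : Type*) [Fintype σ] (R : Type*) [CommRing R] (n : ℕ) :
    ((n + 1 : ℕ) : MvPolynomial σ R) * esymm σ R (n + 1) =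
      ∑ km ∈ antidiagonal n, (-1) ^ km.2 * esymm σ R km.1 * psum σ R (km.2 + 1) := by
  rw [mul_esymm_eq_sum, Finset.sum_filter, Finset.Nat.sum_antidiagonal_succ', if_neg (by simp),
    zero_add, Finset.mul_sum]
  refine Finset.sum_congr rfl fun km hkm => ?_
  obtain rfl := HasAntidiagonal.mem_antidiagonal.mp hkm
  have hsq : ((-1 : MvPolynomial σ R) ^ km.1) ^ 2 = 1 := by
    rw [← pow_mul, pow_mul', neg_one_sq, one_pow]
  rw [if_pos (by omega)]
  linear_combination (-1) ^ km.2 * esymm σ R km.1 * psum σ R (km.2 + 1) * hsq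

section GeneratingFunctions

variable (N : ℕ)

/-- The constant term is `1`, not `psum _ _ 0`, which is the number of variables. -/
noncomputable def signedPsumSeries : PowerSeries (MvPolynomial (Fin N) ℚ) :=
  PowerSeries.mk fun m => if m = 0 then 1 else (-1) ^ m * psum (Fin N) ℚ m

theorem mk_pathX_mul_signedPsumSeries :
    PowerSeries.mk (pathX N) * signedPsumSeries N = 1 := by
  refine PowerSeries.ext fun n => ?_
  rcases n with _ | n
  · simp [signedPsumSeries, pathX]
  · rw [PowerSeries.coeff_mul, Finset.Nat.sum_antidiagonal_succ', PowerSeries.coeff_one,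
      if_neg n.succ_ne_zero]
    simp only [signedPsumSeries, PowerSeries.coeff_mk, pathX_succ_eq_sum_psum, if_true,
      Nat.add_one_ne_zero, if_false, mul_one, ← Finset.sum_add_distrib]
    exact Finset.sum_eq_zero fun _ _ => by ring

theorem mk_esymm_mul_signedPsumSeries :
    PowerSeries.mk (fun n => esymm (Fin N) ℚ n) * signedPsumSeries N =
      PowerSeries.mk fun n => (1 - n) * esymm (Fin N) ℚ n := by
  refine PowerSeries.ext fun n => ?_
  rcases n with _ | n
  · simp [signedPsumSeries]
  · rw [PowerSeries.coeff_mul, Finset.Nat.sum_antidiagonal_succ']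
    simp only [signedPsumSeries, PowerSeries.coeff_mk, if_true, Nat.add_one_ne_zero, if_false,
      mul_one]
    have hnewton : ∑ km ∈ antidiagonal n,
        esymm (Fin N) ℚ km.1 * ((-1) ^ (km.2 + 1) * psum (Fin N) ℚ (km.2 + 1)) =
          -(((n + 1 : ℕ) : MvPolynomial (Fin N) ℚ) * esymm (Fin N) ℚ (n + 1)) := by
      rw [succ_mul_esymm_succ_eq_sum, ← Finset.sum_neg_distrib]
      exact Finset.sum_congr rfl fun _ _ => by ring
    rw [hnewton]
    ring

theorem pathX_succ_eq_esymm_add_sum (n : ℕ) :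
    pathX N (n + 1) = esymm (Fin N) ℚ (n + 1) +
      ∑ km ∈ antidiagonal n, (km.2 : ℚ) • (esymm (Fin N) ℚ (km.2 + 1) * pathX N km.1) := by
  have hseries :
      PowerSeries.mk (pathX N) * PowerSeries.mk (fun n => (1 - n) * esymm (Fin N) ℚ n) =
        PowerSeries.mk fun n => esymm (Fin N) ℚ n := by
    rw [← mk_esymm_mul_signedPsumSeries, mul_left_comm, mk_pathX_mul_signedPsumSeries, mul_one]
  have hcoeff := congrArg (PowerSeries.coeff (n + 1)) hseries
  rw [PowerSeries.coeff_mul, Finset.Nat.sum_antidiagonal_succ'] at hcoeff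
  have hterms : ∑ km ∈ antidiagonal n, pathX N km.1 *
      ((1 - ((km.2 + 1 : ℕ) : MvPolynomial (Fin N) ℚ)) * esymm (Fin N) ℚ (km.2 + 1)) =
        -∑ km ∈ antidiagonal n, (km.2 : ℚ) • (esymm (Fin N) ℚ (km.2 + 1) * pathX N km.1) := by
    rw [← Finset.sum_neg_distrib]
    refine Finset.sum_congr rfl fun km _ => ?_
    rw [Nat.cast_smul_eq_nsmul, nsmul_eq_mul]
    push_cast
    ring
  simp only [PowerSeries.coeff_mk, hterms, Nat.cast_zero, sub_zero, esymm_zero,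
    mul_one] at hcoeff
  linear_combination hcoeff

end GeneratingFunctions

theorem eProd_add {N : ℕ} (s t : Multiset ℕ) :
    (eProd (s + t) : MvPolynomial (Fin N) ℚ) = eProd s * eProd t := by
  simp [eProd]

theorem eProd_filter_ne_zero {N : ℕ} (s : Multiset ℕ) :
    (eProd (s.filter (· ≠ 0)) : MvPolynomial (Fin N) ℚ) = eProd s := by
  conv_rhs => rw [← Multiset.filter_add_not (· ≠ 0) s]
  have hzeros : (eProd (s.filter fun k => ¬k ≠ 0) : MvPolynomial (Fin N) ℚ) = 1 := by
    refine Multiset.prod_eq_one fun x hx => ?_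
    obtain ⟨k, hk, rfl⟩ := Multiset.mem_map.mp hx
    rw [of_not_not (Multiset.of_mem_filter (p := fun k => ¬k ≠ 0) hk), esymm_zero]
  rw [eProd_add, hzeros, mul_one]

def EPositive (n : ℕ) (f : (N : ℕ) → MvPolynomial (Fin N) ℚ) : Prop :=
  ∃ c : Nat.Partition n → ℚ, (∀ p, 0 ≤ c p) ∧ ∀ N, f N = ∑ p, c p • eProd p.parts

namespace EPositive

variable {n : ℕ} {f g : (N : ℕ) → MvPolynomial (Fin N) ℚ}

theorem of_sum {ι : Type*} [Fintype ι] (w : ι → ℚ) (hw : ∀ i, 0 ≤ w i)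
    (parts : ι → Multiset ℕ) (hparts : ∀ i, (parts i).sum = n)
    (hf : ∀ N, f N = ∑ i, w i • eProd (parts i)) : EPositive n f := by
  refine ⟨fun p => ∑ i, if Nat.Partition.ofSums n (parts i) (hparts i) = p then w i else 0,
    fun p => Finset.sum_nonneg fun i _ => by split_ifs <;> simp [hw], fun N => ?_⟩
  simp only [hf, Finset.sum_smul, ite_smul, zero_smul]
  rw [Finset.sum_comm]
  simp [eProd_filter_ne_zero]

theorem zero : EPositive n fun _ => 0 :=
  ⟨0, fun _ => le_rfl, fun _ => by simp⟩

theorem add (hf : EPositive n f) (hg : EPositive n g) : EPositive n fun N => f N + g N := by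
  obtain ⟨c, hc, hcf⟩ := hf
  obtain ⟨d, hd, hdg⟩ := hg
  exact ⟨c + d, fun p => add_nonneg (hc p) (hd p), fun N => by
    simp [hcf, hdg, add_smul, Finset.sum_add_distrib]⟩

theorem smul (hf : EPositive n f) {r : ℚ} (hr : 0 ≤ r) : EPositive n fun N => r • f N := by
  obtain ⟨c, hc, hcf⟩ := hf
  exact ⟨fun p => r * c p, fun p => mul_nonneg hr (hc p), fun N => by
    simp [hcf, Finset.smul_sum, mul_smul]⟩

theorem sum {ι : Type*} {f : ι → (N : ℕ) → MvPolynomial (Fin N) ℚ} (s : Finset ι)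
    (hf : ∀ i ∈ s, EPositive n (f i)) : EPositive n fun N => ∑ i ∈ s, f i N := by
  induction s using Finset.induction_on with
  | empty => simpa using zero
  | insert i s hi ih =>
    simp only [Finset.sum_insert hi]
    exact (hf i (s.mem_insert_self i)).add (ih fun j hj => hf j (Finset.mem_insert_of_mem hj))

theorem mul {a b : ℕ} (hab : a + b = n) (hf : EPositive a f) (hg : EPositive b g) :
    EPositive n fun N => f N * g N := by
  obtain ⟨c, hc, hcf⟩ := hf
  obtain ⟨d, hd, hdg⟩ := hg
  refine of_sum (fun pq : Nat.Partition a × Nat.Partition b => c pq.1 * d pq.2)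
    (fun pq => mul_nonneg (hc _) (hd _)) (fun pq => pq.1.parts + pq.2.parts)
    (fun pq => by simp [pq.1.parts_sum, pq.2.parts_sum, hab]) fun N => ?_
  rw [hcf, hdg, Finset.sum_mul_sum, Fintype.sum_prod_type]
  simp only [eProd_add, smul_mul_smul_comm]

end EPositive

theorem ePositive_esymm (n : ℕ) : EPositive n fun N => esymm (Fin N) ℚ n :=
  .of_sum (ι := Unit) (fun _ => 1) (fun _ => zero_le_one) (fun _ => {n}) (fun _ => by simp)
    fun _ => by simp [eProd]

theorem ePositive_pathX (n : ℕ) : EPositive n fun N => pathX N n := by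
  induction n using Nat.strong_induction_on with
  | _ n ih =>
  rcases n with _ | n
  · simpa [pathX] using ePositive_esymm 0
  · simp only [pathX_succ_eq_esymm_add_sum]
    refine (ePositive_esymm _).add (.sum _ fun km hkm => .smul ?_ km.2.cast_nonneg)
    have hkm : km.1 + km.2 = n := HasAntidiagonal.mem_antidiagonal.mp hkm
    exact .mul (by omega) (ePositive_esymm _) (ih km.1 (by omega))

/-- The chromatic symmetric function of a path is `e`-positive. -/
theorem path_X_ePositive (d : ℕ) :
    ∃ c : Nat.Partition (d + 1) → ℚ, (∀ p, 0 ≤ c p) ∧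
      ∀ N : ℕ, Xcomm (pathEnds d) N =
        ∑ p : Nat.Partition (d + 1), c p • eProd p.parts :=
  ePositive_pathX (d + 1)
end

section
/- The noncommutative chromatic symmetric function distinguishes simple graphs: if G and H are graphs with no loops or multiple edges on the labeled vertex set {v_1,...,v_d} and Y_G = Y_H, then G = H. -/
open Finset

attribute [local instance] Classical.propDecidable

/-! Give `v_j` the colour of `v_i` and every other vertex its own colour: this word is a
proper colouring of a simple graph exactly when `v_i v_j` is not an edge, so its coefficient
in `Y_G` records whether `i` and `j` are adjacent. -/

lemma Y_apply_eq_zero_iff {d : ℕ} {ε : Type*} (ends : ε → Sym2 (Fin d)) (w : Fin d → ℕ) :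
    Y ends w = 0 ↔ ¬ Proper ends w := by
  simp [Y]

lemma SimpleGraph.proper_edgeSet_iff {d : ℕ} {C : Type*} (G : SimpleGraph (Fin d))
    (w : Fin d → C) :
    Proper (fun e : G.edgeSet => (e : Sym2 (Fin d))) w ↔ ∀ a b, G.Adj a b → w a ≠ w b := by
  constructor
  · exact fun hw a b hab => hw ⟨s(a, b), hab⟩ a b rfl
  · rintro hw ⟨e, he⟩ a b rfl
    exact hw a b he

lemma SimpleGraph.proper_update_val_iff {d : ℕ} (G : SimpleGraph (Fin d)) (i j : Fin d) :
    Proper (fun e : G.edgeSet => (e : Sym2 (Fin d)))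
      (Function.update (fun k : Fin d => (k : ℕ)) j i) ↔ ¬ G.Adj i j := by
  have merged_iff : ∀ a b : Fin d, a ≠ b →
      (Function.update (fun k : Fin d => (k : ℕ)) j i a =
        Function.update (fun k : Fin d => (k : ℕ)) j i b ↔ s(a, b) = s(i, j)) := by
    intro a b hab
    by_cases ha : a = j <;> by_cases hb : b = j <;>
      simp_all [Function.update_apply, Fin.val_inj, eq_comm]
  rw [G.proper_edgeSet_iff]
  refine ⟨fun hw hij => hw i j hij ?_, fun hij a b hab => ?_⟩
  · exact (merged_iff i j hij.ne).2 rfl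
  · rw [Ne, merged_iff a b hab.ne]
    intro hab_ij
    exact hij ((G.adj_congr_of_sym2 hab_ij).1 hab)

lemma SimpleGraph.adj_iff_Y_update_val_eq_zero {d : ℕ} (G : SimpleGraph (Fin d)) (i j : Fin d) :
    G.Adj i j ↔
      Y (fun e : G.edgeSet => (e : Sym2 (Fin d)))
        (Function.update (fun k : Fin d => (k : ℕ)) j i) = 0 := by
  rw [Y_apply_eq_zero_iff, G.proper_update_val_iff, not_not]

/-- `Y` distinguishes simple graphs: if `Y_G = Y_H` for two graphs with no
loops or multiple edges on the same labeled vertex set, then `G = H`. -/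
theorem Y_injective_on_simpleGraphs {d : ℕ} (G H : SimpleGraph (Fin d))
    (h : Y (fun e : G.edgeSet => (e : Sym2 (Fin d))) =
         Y (fun e : H.edgeSet => (e : Sym2 (Fin d)))) :
    G = H := by
  ext i j
  rw [G.adj_iff_Y_update_val_eq_zero, H.adj_iff_Y_update_val_eq_zero, h]
end
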